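/- arXiv:1402.4801 — 2 statements merged into one kernel-verified Lean document; each statement's English description precedes it below -/
import Mathlib

section
/- Let ν > 0, t₀ > 0, C > 0, p > 2, set p' = p/(p−1) and β = (2−p')/(2p') (so β ∈ (0, 1/2]), and let F ≥ 0. Suppose (U_k)_{k≥0} is a sequence of nonnegative real numbers satisfying, for all k ≥ 1, U_k ≤ C·(2^{2k+1}/(ν t₀ M))·U_{k−1}^{3/2} + C·F·(2^{2k/p'}/(ν M^{2/p'}))·U_{k−1}^{1+β}, where M > 0. Then there exists a constant c > 0 depending only on C and p such that if M ≥ c·( U₀^{1/2}/(ν t₀) + (F/ν)^{p/(2p−2)} · U₀^{(p−2)/(4p−4)} ), then U_k → 0 as k → ∞. -/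
set_option maxHeartbeats 1000000


open Filter

private lemma term_bound_SQG (K ρ e δ U0 : ℝ) (hK : 0 ≤ K) (he : 0 < e) (hρ : 0 ≤ ρ)
    (hδ : 0 < δ) (hU0 : 0 ≤ U0) (h1 : ρ * δ ^ e ≤ 1)
    (h2 : K * U0 ^ e ≤ δ / 2) (k : ℕ) :
    K * ρ ^ (k:ℝ) * (U0 * δ ^ (k:ℝ)) ^ (1 + e) ≤ 1/2 * (U0 * δ ^ ((k:ℝ)+1)) := by
  have hδe : 0 ≤ ρ * δ ^ e := mul_nonneg hρ (Real.rpow_nonneg hδ.le e)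
  have key : (ρ * δ ^ e) ^ (k:ℝ) ≤ 1 := Real.rpow_le_one hδe h1 (Nat.cast_nonneg k)
  have e1 : (U0 * δ ^ (k:ℝ)) ^ (1 + e) = (U0 * U0 ^ e) * (δ ^ (k:ℝ) * (δ ^ e) ^ (k:ℝ)) := by
    rw [Real.mul_rpow hU0 (Real.rpow_nonneg hδ.le _),
        Real.rpow_add' hU0 (by positivity), Real.rpow_one,
        ← Real.rpow_mul hδ.le, show (k:ℝ) * (1 + e) = (k:ℝ) + e * (k:ℝ) by ring,
        Real.rpow_add hδ, Real.rpow_mul hδ.le]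
  rw [e1]
  calc K * ρ ^ (k:ℝ) * ((U0 * U0 ^ e) * (δ ^ (k:ℝ) * (δ ^ e) ^ (k:ℝ)))
      = (K * U0 ^ e) * ((ρ * δ ^ e) ^ (k:ℝ)) * (U0 * δ ^ (k:ℝ)) := by
        rw [Real.mul_rpow hρ (Real.rpow_nonneg hδ.le _)]; ring
    _ ≤ (δ/2) * 1 * (U0 * δ ^ (k:ℝ)) := by
        have hKU : 0 ≤ K * U0 ^ e := mul_nonneg hK (Real.rpow_nonneg hU0 _)
        have h3 : 0 ≤ U0 * δ ^ (k:ℝ) := mul_nonneg hU0 (Real.rpow_nonneg hδ.le _)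
        gcongr
    _ = 1/2 * (U0 * δ ^ ((k:ℝ)+1)) := by
        rw [Real.rpow_add hδ, Real.rpow_one]; ring

/-- The De Giorgi-type nonlinear iteration lemma for the forced critical SQG equation.
Let `ν > 0`, `t₀ > 0`, `C > 0`, `p > 2`, `p' = p/(p-1)`, `β = (2-p')/(2p')`, `F ≥ 0`,
and let `(U_k)` be a nonnegative sequence satisfying
`U_k ≤ C 2^{2k+1}/(ν t₀ M) U_{k-1}^{3/2} + C F 2^{2k/p'}/(ν M^{2/p'}) U_{k-1}^{1+β}`
for all `k ≥ 1`.  Then there is a constant `c > 0` depending only on `C` and `p` such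
that if `M ≥ c (U₀^{1/2}/(ν t₀) + (F/ν)^{p/(2p-2)} U₀^{(p-2)/(4p-4)})`, then `U_k → 0`. -/
theorem deGiorgi_iteration_SQG (C p p' β : ℝ) (hC : 0 < C) (hp : 2 < p)
    (hp' : p' = p / (p - 1)) (hβ : β = (2 - p') / (2 * p')) :
    ∃ c : ℝ, 0 < c ∧
      ∀ (ν t₀ F M : ℝ) (U : ℕ → ℝ), 0 < ν → 0 < t₀ → 0 ≤ F → 0 < M →
        (∀ k, 0 ≤ U k) →
        (∀ k : ℕ, 1 ≤ k →
          U k ≤ C * ((2 : ℝ) ^ (2 * (k : ℝ) + 1) / (ν * t₀ * M)) * U (k - 1) ^ ((3 : ℝ) / 2)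
            + C * F * ((2 : ℝ) ^ (2 * (k : ℝ) / p') / (ν * M ^ (2 / p'))) *
                U (k - 1) ^ (1 + β)) →
        c * (U 0 ^ ((1 : ℝ) / 2) / (ν * t₀)
              + (F / ν) ^ (p / (2 * p - 2)) * U 0 ^ ((p - 2) / (4 * p - 4))) ≤ M →
        Tendsto U atTop (nhds 0) := by
  have hp1' : p - 1 ≠ 0 := by linarith
  have hp'1 : 1 < p' := by rw [hp', lt_div_iff₀ (by linarith)]; linarith
  have hp'2 : p' < 2 := by rw [hp', div_lt_iff₀ (by linarith)]; linarith
  have hp'pos : 0 < p' := by linarith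
  have hp'ne : p' ≠ 0 := by linarith
  have h2p'ne : (2:ℝ) - p' ≠ 0 := by linarith
  have hβpos : 0 < β := by rw [hβ]; exact div_pos (by linarith) (by linarith)
  set a : ℝ := 4 / (2 - p') with ha_def
  have ha : 0 < a := div_pos (by norm_num) (by linarith)
  set δ : ℝ := min (1/16) ((2:ℝ) ^ (-a)) with hδ_def
  have hδ0 : 0 < δ := lt_min (by norm_num) (Real.rpow_pos_of_pos two_pos _)
  have hδ16 : δ ≤ 1/16 := min_le_left _ _
  have hδa : δ ≤ (2:ℝ) ^ (-a) := min_le_right _ _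
  have hδ1 : δ < 1 := lt_of_le_of_lt hδ16 (by norm_num)
  have cond1 : (4:ℝ) * δ ^ ((1:ℝ)/2) ≤ 1 := by
    have h0 : δ ^ ((1:ℝ)/2) ≤ ((1:ℝ)/16) ^ ((1:ℝ)/2) :=
      Real.rpow_le_rpow hδ0.le hδ16 (by norm_num)
    have h4 : ((1:ℝ)/16) ^ ((1:ℝ)/2) = 1/4 := by
      rw [show (1/16:ℝ) = (1/4)^(2:ℝ) by norm_num, ← Real.rpow_mul (by norm_num)]
      norm_num
    linarith [h4 ▸ h0]
  have haβ : a * β = 2 / p' := by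
    rw [hβ, ha_def]; field_simp [h2p'ne]; ring
  have cond2 : (2:ℝ) ^ (2/p') * δ ^ β ≤ 1 := by
    have h1 : δ ^ β ≤ ((2:ℝ) ^ (-a)) ^ β := Real.rpow_le_rpow hδ0.le hδa hβpos.le
    have h2 : ((2:ℝ) ^ (-a)) ^ β = (2:ℝ) ^ (-(2/p')) := by
      rw [← Real.rpow_mul (by norm_num), neg_mul, haβ]
    calc (2:ℝ) ^ (2/p') * δ ^ β ≤ (2:ℝ) ^ (2/p') * (2:ℝ) ^ (-(2/p')) := by
          rw [← h2]; gcongr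
      _ = 1 := by rw [← Real.rpow_add two_pos]; simp
  have h2le4 : (2:ℝ) ^ (2/p') ≤ 4 := by
    calc (2:ℝ) ^ (2/p') ≤ (2:ℝ) ^ (2:ℝ) :=
          Real.rpow_le_rpow_of_exponent_le one_le_two
            (by rw [div_le_iff₀ hp'pos]; linarith)
      _ = 4 := by norm_num
  have hexp1 : p / (2*p - 2) = p'/2 := by
    rw [hp']; field_simp [hp1', show (2:ℝ)*p-2 ≠ 0 by linarith]
  have hexp2 : (p - 2)/(4*p - 4) = β * (p'/2) := by
    have hβp' : β * (p'/2) = (2-p')/4 := by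
      rw [hβ]; field_simp; ring
    rw [hβp', hp', div_eq_div_iff (by linarith) (by norm_num)]
    field_simp [show (4:ℝ)*p-4 ≠ 0 by linarith]; ring
  refine ⟨max 1 (16 * C / δ), lt_of_lt_of_le one_pos (le_max_left _ _), ?_⟩
  set c : ℝ := max 1 (16 * C / δ) with hc_def
  have hc1 : (1:ℝ) ≤ c := le_max_left _ _
  have hc2 : 16 * C / δ ≤ c := le_max_right _ _
  have hc0 : (0:ℝ) ≤ c := by linarith
  intro ν t₀ F M U hν ht₀ hF hM0 hUnn hrec hM
  have hU0 : 0 ≤ U 0 := hUnn 0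
  have hX : 0 ≤ U 0 ^ ((1:ℝ)/2) := Real.rpow_nonneg hU0 _
  have hFν : (0:ℝ) ≤ F / ν := by positivity
  have hY : 0 ≤ (F / ν) ^ (p / (2*p - 2)) * U 0 ^ ((p - 2)/(4*p - 4)) :=
    mul_nonneg (Real.rpow_nonneg hFν _) (Real.rpow_nonneg hU0 _)
  -- the two individual smallness hypotheses on M
  have h1 : c * (U 0 ^ ((1:ℝ)/2) / (ν * t₀)) ≤ M :=
    le_trans (mul_le_mul_of_nonneg_left (by linarith) hc0) hM
  have h2 : c * ((F / ν) ^ (p'/2) * U 0 ^ (β * (p'/2))) ≤ M := by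
    rw [← hexp2, ← hexp1]
    have hXt : 0 ≤ U 0 ^ ((1:ℝ)/2) / (ν * t₀) := by positivity
    exact le_trans (mul_le_mul_of_nonneg_left (by linarith) hc0) hM
  -- small-coefficient condition for the first term
  have hA : 8 * C / (ν * t₀ * M) * U 0 ^ ((1:ℝ)/2) ≤ δ / 2 := by
    have h1' : c * U 0 ^ ((1:ℝ)/2) ≤ M * (ν * t₀) := by
      rw [← mul_div_assoc] at h1
      exact (div_le_iff₀ (by positivity)).mp h1
    have h1'' : 16 * C * U 0 ^ ((1:ℝ)/2) ≤ M * (ν * t₀) * δ := by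
      calc 16 * C * U 0 ^ ((1:ℝ)/2) = (16 * C / δ) * U 0 ^ ((1:ℝ)/2) * δ := by
            field_simp
        _ ≤ c * U 0 ^ ((1:ℝ)/2) * δ := by gcongr
        _ ≤ M * (ν * t₀) * δ := by gcongr
    rw [show 8 * C / (ν * t₀ * M) * U 0 ^ ((1:ℝ)/2)
        = (8 * C * U 0 ^ ((1:ℝ)/2)) / (ν * t₀ * M) by ring,
      div_le_div_iff₀ (by positivity) (by norm_num)]
    nlinarith [h1'']
  -- small-coefficient condition for the second term
  have hB : C * F * ((2:ℝ) ^ (2/p') / (ν * M ^ (2/p'))) * U 0 ^ β ≤ δ / 2 := by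
    have hMppos : (0:ℝ) < M ^ (2/p') := Real.rpow_pos_of_pos hM0 _
    have hcp : 8 * C / δ ≤ c ^ (2/p') := by
      calc 8 * C / δ ≤ 16 * C / δ := by
            exact (div_le_div_iff_of_pos_right hδ0).mpr (by linarith)
        _ ≤ c := hc2
        _ = c ^ (1:ℝ) := (Real.rpow_one c).symm
        _ ≤ c ^ (2/p') := Real.rpow_le_rpow_of_exponent_le hc1
              (by rw [le_div_iff₀ hp'pos]; linarith)
    have hMp : (8 * C / δ) * ((F/ν) * U 0 ^ β) ≤ M ^ (2/p') := by
      have hbase : 0 ≤ c * ((F / ν) ^ (p'/2) * U 0 ^ (β * (p'/2))) := by positivity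
      have hpow := Real.rpow_le_rpow hbase h2 (by positivity : (0:ℝ) ≤ 2/p')
      have hexpand : (c * ((F / ν) ^ (p'/2) * U 0 ^ (β * (p'/2)))) ^ (2/p')
          = c ^ (2/p') * ((F/ν) * U 0 ^ β) := by
        rw [Real.mul_rpow hc0 (by positivity),
            Real.mul_rpow (Real.rpow_nonneg hFν _) (Real.rpow_nonneg hU0 _),
            ← Real.rpow_mul hFν, ← Real.rpow_mul hU0,
            show p'/2 * (2/p') = 1 by field_simp,
            show β * (p'/2) * (2/p') = β by field_simp,
            Real.rpow_one]
      rw [hexpand] at hpow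
      calc (8 * C / δ) * ((F/ν) * U 0 ^ β) ≤ c ^ (2/p') * ((F/ν) * U 0 ^ β) := by
            have : 0 ≤ (F/ν) * U 0 ^ β := mul_nonneg hFν (Real.rpow_nonneg hU0 _)
            gcongr
        _ ≤ M ^ (2/p') := hpow
    have key : 8 * C * F * U 0 ^ β ≤ δ * (ν * M ^ (2/p')) := by
      have h := mul_le_mul_of_nonneg_left hMp (le_of_lt (mul_pos hδ0 hν))
      calc 8 * C * F * U 0 ^ β = (δ * ν) * ((8 * C / δ) * ((F/ν) * U 0 ^ β)) := by
            field_simp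
        _ ≤ (δ * ν) * M ^ (2/p') := h
        _ = δ * (ν * M ^ (2/p')) := by ring
    calc C * F * ((2:ℝ) ^ (2/p') / (ν * M ^ (2/p'))) * U 0 ^ β
        ≤ C * F * (4 / (ν * M ^ (2/p'))) * U 0 ^ β := by
          have : 0 ≤ U 0 ^ β := Real.rpow_nonneg hU0 _
          gcongr
      _ ≤ δ / 2 := by
          rw [show C * F * (4 / (ν * M ^ (2/p'))) * U 0 ^ β
              = (4 * C * F * U 0 ^ β) / (ν * M ^ (2/p')) by ring,
            div_le_div_iff₀ (by positivity) (by norm_num)]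
          nlinarith [key]
  -- the geometric decay by induction
  have hbound : ∀ k, U k ≤ U 0 * δ ^ (k:ℝ) := by
    intro k
    induction k with
    | zero => simp
    | succ k ih =>
      have hrk := hrec (k+1) (Nat.le_add_left 1 k)
      simp only [Nat.add_sub_cancel] at hrk
      have hUk := hUnn k
      have m1 : U k ^ ((3:ℝ)/2) ≤ (U 0 * δ ^ (k:ℝ)) ^ ((3:ℝ)/2) :=
        Real.rpow_le_rpow hUk ih (by norm_num)
      have m2 : U k ^ (1+β) ≤ (U 0 * δ ^ (k:ℝ)) ^ (1+β) :=
        Real.rpow_le_rpow hUk ih (by linarith)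
      have e1 : (2:ℝ) ^ (2 * (((k+1):ℕ):ℝ) + 1) = 8 * (4:ℝ) ^ (k:ℝ) := by
        rw [show 2 * (((k+1):ℕ):ℝ) + 1 = 3 + 2*(k:ℝ) by push_cast; ring,
          Real.rpow_add two_pos, Real.rpow_mul (by norm_num : (0:ℝ) ≤ 2)]
        norm_num
      have e2 : (2:ℝ) ^ (2 * (((k+1):ℕ):ℝ) / p')
          = (2:ℝ) ^ (2/p') * ((2:ℝ) ^ (2/p')) ^ (k:ℝ) := by
        rw [show 2 * (((k+1):ℕ):ℝ) / p' = 2/p' + (2/p') * (k:ℝ) by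
            push_cast; field_simp; ring,
          Real.rpow_add two_pos, Real.rpow_mul (by norm_num : (0:ℝ) ≤ 2)]
      rw [e1, e2] at hrk
      have hMppos : (0:ℝ) < M ^ (2/p') := Real.rpow_pos_of_pos hM0 _
      calc U (k+1)
          ≤ C * (8 * (4:ℝ) ^ (k:ℝ) / (ν*t₀*M)) * U k ^ ((3:ℝ)/2)
            + C*F*((2:ℝ) ^ (2/p') * ((2:ℝ) ^ (2/p')) ^ (k:ℝ) / (ν*M ^ (2/p')))
              * U k ^ (1+β) := hrk
        _ ≤ C * (8 * (4:ℝ) ^ (k:ℝ) / (ν*t₀*M)) * (U 0 * δ ^ (k:ℝ)) ^ ((3:ℝ)/2)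
            + C*F*((2:ℝ) ^ (2/p') * ((2:ℝ) ^ (2/p')) ^ (k:ℝ) / (ν*M ^ (2/p')))
              * (U 0 * δ ^ (k:ℝ)) ^ (1+β) :=
            add_le_add (mul_le_mul_of_nonneg_left m1 (by positivity))
              (mul_le_mul_of_nonneg_left m2 (by positivity))
        _ = (8*C/(ν*t₀*M)) * (4:ℝ) ^ (k:ℝ) * (U 0 * δ ^ (k:ℝ)) ^ (1 + (1:ℝ)/2)
            + (C*F*((2:ℝ) ^ (2/p')/(ν*M ^ (2/p')))) * ((2:ℝ) ^ (2/p')) ^ (k:ℝ)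
              * (U 0 * δ ^ (k:ℝ)) ^ (1+β) := by
            rw [show (3:ℝ)/2 = 1 + (1:ℝ)/2 by norm_num]; ring
        _ ≤ 1/2 * (U 0 * δ ^ ((k:ℝ)+1)) + 1/2 * (U 0 * δ ^ ((k:ℝ)+1)) :=
            add_le_add
              (term_bound_SQG _ _ _ _ _ (by positivity) (by norm_num) (by norm_num)
                hδ0 hU0 cond1 hA k)
              (term_bound_SQG _ _ _ _ _ (by positivity) hβpos (by positivity)
                hδ0 hU0 cond2 hB k)
        _ = U 0 * δ ^ (((k+1):ℕ):ℝ) := by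
            rw [show (((k+1):ℕ):ℝ) = (k:ℝ)+1 by push_cast; ring]; ring
  -- conclude
  have hlim : Tendsto (fun k : ℕ => U 0 * δ ^ k) atTop (nhds 0) := by
    have h := tendsto_pow_atTop_nhds_zero_of_lt_one hδ0.le hδ1
    simpa using h.const_mul (U 0)
  exact squeeze_zero hUnn
    (fun k => by rw [← Real.rpow_natCast δ k]; exact hbound k) hlim
end

section
/- Let h ∈ L¹(ℝⁿ) with ∫_{ℝⁿ} h(y) dy = 1, and let u, θ : ℝⁿ → ℝ be bounded measurable functions. Denote by Pg = h * g the convolution of h with g, and define r(u,θ)(x) = ∫_{ℝⁿ} h(y) (u(x−y) − u(x)) (θ(x−y) − θ(x)) dy. Then for every x ∈ ℝⁿ, P(uθ)(x) = r(u,θ)(x) − (u(x) − Pu(x)) (θ(x) − Pθ(x)) + Pu(x) · Pθ(x). -/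
open MeasureTheory

/-- Commutator decomposition for a mass-one convolution kernel: if `h ∈ L¹(ℝⁿ)` with
`∫ h = 1`, `u, θ` are bounded measurable functions, `Pg = h * g` denotes convolution, and
`r(u,θ)(x) = ∫ h(y)(u(x-y) - u(x))(θ(x-y) - θ(x)) dy`, then for every `x`,
`P(uθ)(x) = r(u,θ)(x) - (u(x) - Pu(x))(θ(x) - Pθ(x)) + Pu(x)·Pθ(x)`. -/
theorem commutator_decomposition (n : ℕ) (h u θ : (Fin n → ℝ) → ℝ)
    (hh : Integrable h) (hmass : ∫ y, h y = 1)
    (hu : Measurable u) (hθ : Measurable θ)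
    (Cu : ℝ) (hub : ∀ x, |u x| ≤ Cu) (Cθ : ℝ) (hθb : ∀ x, |θ x| ≤ Cθ) :
    ∀ x : Fin n → ℝ,
      (∫ y, h y * (u (x - y) * θ (x - y))) =
        (∫ y, h y * ((u (x - y) - u x) * (θ (x - y) - θ x)))
          - (u x - ∫ y, h y * u (x - y)) * (θ x - ∫ y, h y * θ (x - y))
          + (∫ y, h y * u (x - y)) * (∫ y, h y * θ (x - y)) := by
  intro x
  -- general integrability lemma
  have Ib : ∀ g : (Fin n → ℝ) → ℝ, Measurable g → (∃ C, ∀ y, |g y| ≤ C) →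
      Integrable (fun y => h y * g y) := by
    intro g hg ⟨C, hC⟩
    have := hh.bdd_mul hg.aestronglyMeasurable (c := C) (Filter.Eventually.of_forall fun y => by simpa [Real.norm_eq_abs] using hC y)
    simpa [mul_comm] using this
  have hmu : Measurable fun y : Fin n → ℝ => u (x - y) :=
    hu.comp (measurable_const.sub measurable_id)
  have hmθ : Measurable fun y : Fin n → ℝ => θ (x - y) :=
    hθ.comp (measurable_const.sub measurable_id)
  have I1 : Integrable (fun y => h y * (u (x - y) * θ (x - y))) :=
    Ib _ (hmu.mul hmθ) ⟨|Cu| * |Cθ|, fun y => by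
      rw [abs_mul]
      exact mul_le_mul ((hub _).trans (le_abs_self _)) ((hθb _).trans (le_abs_self _))
        (abs_nonneg _) (abs_nonneg _)⟩
  have I2 : Integrable (fun y => h y * ((u (x - y) - u x) * (θ (x - y) - θ x))) :=
    Ib _ ((hmu.sub measurable_const).mul (hmθ.sub measurable_const))
      ⟨(|Cu| + |Cu|) * (|Cθ| + |Cθ|), fun y => by
        rw [abs_mul]
        refine mul_le_mul ((abs_sub _ _).trans ?_) ((abs_sub _ _).trans ?_)
          (abs_nonneg _) (by positivity)
        · exact add_le_add ((hub _).trans (le_abs_self _)) ((hub _).trans (le_abs_self _))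
        · exact add_le_add ((hθb _).trans (le_abs_self _)) ((hθb _).trans (le_abs_self _))⟩
  have I3 : Integrable (fun y => h y * u (x - y)) :=
    Ib _ hmu ⟨|Cu|, fun y => (hub _).trans (le_abs_self _)⟩
  have I4 : Integrable (fun y => h y * θ (x - y)) :=
    Ib _ hmθ ⟨|Cθ|, fun y => (hθb _).trans (le_abs_self _)⟩
  have key : ∀ y, h y * (u (x - y) * θ (x - y)) =
      h y * ((u (x - y) - u x) * (θ (x - y) - θ x))
        + (h y * u (x - y)) * θ x + (h y * θ (x - y)) * u x
        - h y * (u x * θ x) := by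
    intro y; ring
  have step : (∫ y, h y * (u (x - y) * θ (x - y))) =
      (∫ y, h y * ((u (x - y) - u x) * (θ (x - y) - θ x)))
        + (∫ y, h y * u (x - y)) * θ x + (∫ y, h y * θ (x - y)) * u x
        - u x * θ x := by
    calc (∫ y, h y * (u (x - y) * θ (x - y)))
        = ∫ y, (h y * ((u (x - y) - u x) * (θ (x - y) - θ x))
            + (h y * u (x - y)) * θ x + (h y * θ (x - y)) * u x
            - h y * (u x * θ x)) := by
          exact integral_congr_ae (Filter.Eventually.of_forall key)
      _ = (∫ y, h y * ((u (x - y) - u x) * (θ (x - y) - θ x)))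
            + (∫ y, h y * u (x - y)) * θ x + (∫ y, h y * θ (x - y)) * u x
            - u x * θ x := by
          have Ia : Integrable (fun y => h y * ((u (x - y) - u x) * (θ (x - y) - θ x))
              + h y * u (x - y) * θ x) := I2.add (I3.mul_const _)
          have Iab : Integrable (fun y => h y * ((u (x - y) - u x) * (θ (x - y) - θ x))
              + h y * u (x - y) * θ x + h y * θ (x - y) * u x) := Ia.add (I4.mul_const _)
          have Id : Integrable (fun y => h y * (u x * θ x)) := hh.mul_const _
          rw [integral_sub Iab Id, integral_add Ia (I4.mul_const _),
            integral_add I2 (I3.mul_const _),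
            integral_mul_const, integral_mul_const, integral_mul_const, hmass, one_mul]
  rw [step]; ring
end
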